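/- Let X = {x_n : n ≥ 1} ∪ {u_n : n ≥ 1} ∪ {0} ⊂ ℓ¹ with x_n = (3+4/n)e_n, u_n = (1+1/n)e_n, and T: X → X given by Tx_n = u_n, Tu_n = 0, T0 = 0. Then T satisfies (CM_K) but fails the Kannan CJM condition: for ε = 2, for every δ > 0 there exist points x, y ∈ X with (1/2)(d(x,Tx) + d(y,Ty)) < ε + δ and d(Tx,Ty) > ε. -/
import Mathlib

open scoped Classical

noncomputable def xseq (n : ℕ) : lp (fun _ : ℕ => ℝ) 1 :=
  (3 + 4 / (n : ℝ)) • lp.single 1 n (1 : ℝ)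

noncomputable def useq (n : ℕ) : lp (fun _ : ℕ => ℝ) 1 :=
  (1 + 1 / (n : ℝ)) • lp.single 1 n (1 : ℝ)

lemma hp1 : 0 < (1 : ENNReal).toReal := by simp

lemma smul_single_one (a : ℝ) (n : ℕ) :
    a • (lp.single 1 n (1:ℝ) : lp (fun _ : ℕ => ℝ) 1) = lp.single 1 n a := by
  rw [← lp.single_smul]; norm_num

lemma norm_single' (a : ℝ) (n : ℕ) :
    ‖(lp.single 1 n a : lp (fun _ : ℕ => ℝ) 1)‖ = |a| := by
  simpa using lp.norm_single hp1 (fun _ : ℕ => a) n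

lemma norm_pair (a b : ℝ) {n m : ℕ} (h : n ≠ m) :
    ‖(lp.single 1 n a : lp (fun _ : ℕ => ℝ) 1) + lp.single 1 m b‖ = |a| + |b| := by
  classical
  have key := lp.norm_sum_single hp1 (fun i : ℕ => if i = n then a else b) ({n, m} : Finset ℕ)
  rw [Finset.sum_pair h, Finset.sum_pair h] at key
  simp only [if_pos rfl, if_neg (Ne.symm h)] at key
  simpa using key

lemma dist_single_same (a b : ℝ) (n : ℕ) :
    dist (lp.single 1 n a : lp (fun _ : ℕ => ℝ) 1) (lp.single 1 n b) = |a - b| := by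
  rw [dist_eq_norm, ← smul_single_one a, ← smul_single_one b, ← sub_smul, smul_single_one,
    norm_single']

lemma dist_single_ne (a b : ℝ) {n m : ℕ} (h : n ≠ m) :
    dist (lp.single 1 n a : lp (fun _ : ℕ => ℝ) 1) (lp.single 1 m b) = |a| + |b| := by
  rw [dist_eq_norm, sub_eq_add_neg, ← lp.single_neg, norm_pair a (-b) h, abs_neg]

lemma xseq_eq (n : ℕ) : xseq n = lp.single 1 n (3 + 4 / (n : ℝ)) := by
  rw [xseq, smul_single_one]

lemma useq_eq (n : ℕ) : useq n = lp.single 1 n (1 + 1 / (n : ℝ)) := by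
  rw [useq, smul_single_one]

lemma xseq_inj {n m : ℕ} (h : xseq n = xseq m) : n = m := by
  by_contra hnm
  have h1 : dist (xseq n) (xseq m) = |3 + 4/(n:ℝ)| + |3 + 4/(m:ℝ)| := by
    rw [xseq_eq, xseq_eq, dist_single_ne _ _ hnm]
  rw [h, dist_self, abs_of_pos (by positivity), abs_of_pos (by positivity)] at h1
  have hn : (0:ℝ) ≤ 4/(n:ℝ) := by positivity
  have hm : (0:ℝ) ≤ 4/(m:ℝ) := by positivity
  linarith

lemma useq_ne_xseq {n m : ℕ} : useq n ≠ xseq m := by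
  intro h
  have hn : (0:ℝ) ≤ 1/(n:ℝ) := by positivity
  have hm : (0:ℝ) ≤ 4/(m:ℝ) := by positivity
  rcases eq_or_ne n m with rfl | hnm
  · have h1 : dist (useq n) (xseq n) = |1 + 1/(n:ℝ) - (3 + 4/(n:ℝ))| := by
      rw [useq_eq, xseq_eq, dist_single_same]
    rw [h, dist_self] at h1
    have := neg_abs_le (1 + 1/(n:ℝ) - (3 + 4/(n:ℝ)))
    have h3 : (4:ℝ)/(n:ℝ) - 1/(n:ℝ) = 3/(n:ℝ) := by ring
    have h4 : (0:ℝ) ≤ 3/(n:ℝ) := by positivity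
    linarith
  · have h1 : dist (useq n) (xseq m) = |1 + 1/(n:ℝ)| + |3 + 4/(m:ℝ)| := by
      rw [useq_eq, xseq_eq, dist_single_ne _ _ hnm]
    rw [h, dist_self, abs_of_pos (by positivity), abs_of_pos (by positivity)] at h1
    linarith

lemma zero_ne_xseq {m : ℕ} : (0 : lp (fun _ : ℕ => ℝ) 1) ≠ xseq m := by
  intro h
  have h1 : ‖xseq m‖ = |3 + 4/(m:ℝ)| := by rw [xseq_eq, norm_single']
  rw [← h, norm_zero, abs_of_pos (by positivity)] at h1
  have hm : (0:ℝ) ≤ 4/(m:ℝ) := by positivity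
  linarith

/-- The set X = {x_n : n ≥ 1} ∪ {u_n : n ≥ 1} ∪ {0}. -/
def S9 : Set (lp (fun _ : ℕ => ℝ) 1) :=
  {v | ∃ n : ℕ, 1 ≤ n ∧ v = xseq n} ∪ {v | ∃ n : ℕ, 1 ≤ n ∧ v = useq n} ∪ {0}

/-- The map T with T x_n = u_n, T u_n = 0, T 0 = 0 (and 0 elsewhere). -/
noncomputable def T9 (v : lp (fun _ : ℕ => ℝ) 1) : lp (fun _ : ℕ => ℝ) 1 :=
  if h : ∃ n : ℕ, 1 ≤ n ∧ v = xseq n then useq h.choose else 0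

lemma T9_xseq (n : ℕ) (hn : 1 ≤ n) : T9 (xseq n) = useq n := by
  have h : ∃ k : ℕ, 1 ≤ k ∧ xseq n = xseq k := ⟨n, hn, rfl⟩
  rw [T9, dif_pos h]
  exact congrArg useq (xseq_inj h.choose_spec.2).symm

lemma T9_useq (n : ℕ) : T9 (useq n) = 0 := by
  rw [T9, dif_neg]
  rintro ⟨k, -, hk⟩
  exact useq_ne_xseq hk

lemma T9_zero : T9 0 = 0 := by
  rw [T9, dif_neg]
  rintro ⟨k, -, hk⟩
  exact zero_ne_xseq hk

lemma xseq_mem {n : ℕ} (hn : 1 ≤ n) : xseq n ∈ S9 := Or.inl (Or.inl ⟨n, hn, rfl⟩)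
lemma useq_mem {n : ℕ} (hn : 1 ≤ n) : useq n ∈ S9 := Or.inl (Or.inr ⟨n, hn, rfl⟩)

lemma inv_pos' {n : ℕ} (hn : 1 ≤ n) : (0:ℝ) < 1/(n:ℝ) := by
  have : (0:ℝ) < (n:ℝ) := by exact_mod_cast hn
  positivity

lemma dxu (n : ℕ) : dist (xseq n) (useq n) = 2 + 3/(n:ℝ) := by
  rw [xseq_eq, useq_eq, dist_single_same]
  rw [show (3:ℝ) + 4/(n:ℝ) - (1 + 1/(n:ℝ)) = 2 + 3/(n:ℝ) by ring]
  exact abs_of_pos (by positivity)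

lemma du0 (n : ℕ) : dist (useq n) 0 = 1 + 1/(n:ℝ) := by
  rw [useq_eq, dist_zero_right, norm_single', abs_of_pos (by positivity)]

lemma duu {n m : ℕ} (h : n ≠ m) :
    dist (useq n) (useq m) = (1 + 1/(n:ℝ)) + (1 + 1/(m:ℝ)) := by
  rw [useq_eq, useq_eq, dist_single_ne _ _ h, abs_of_pos (by positivity),
    abs_of_pos (by positivity)]

theorem stmt_9 :
    (∀ x ∈ S9, ∀ y ∈ S9, x ≠ y →
      dist (T9 x) (T9 y) < (dist x (T9 x) + dist y (T9 y)) / 2) ∧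
    (∀ δ > (0 : ℝ), ∃ x ∈ S9, ∃ y ∈ S9,
      (dist x (T9 x) + dist y (T9 y)) / 2 < 2 + δ ∧ dist (T9 x) (T9 y) > 2) := by
  constructor
  · rintro x hx y hy hxy
    rcases hx with (⟨n, hn, rfl⟩ | ⟨n, hn, rfl⟩) | rfl <;>
      rcases hy with (⟨m, hm, rfl⟩ | ⟨m, hm, rfl⟩) | rfl
    · have hnm : n ≠ m := fun e => hxy (congrArg xseq e)
      rw [T9_xseq n hn, T9_xseq m hm, duu hnm, dxu, dxu]
      have := inv_pos' hn; have := inv_pos' hm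
      have e1 : (3:ℝ)/(n:ℝ) = 3 * (1/(n:ℝ)) := by ring
      have e2 : (3:ℝ)/(m:ℝ) = 3 * (1/(m:ℝ)) := by ring
      linarith
    · rw [T9_xseq n hn, T9_useq m, du0 n, dxu n, du0 m]
      have := inv_pos' hn; have := inv_pos' hm
      have e1 : (3:ℝ)/(n:ℝ) = 3 * (1/(n:ℝ)) := by ring
      have e2 : (3:ℝ)/(m:ℝ) = 3 * (1/(m:ℝ)) := by ring
      linarith
    · rw [T9_xseq n hn, T9_zero, du0 n, dxu n, dist_self]
      have := inv_pos' hn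
      have e1 : (3:ℝ)/(n:ℝ) = 3 * (1/(n:ℝ)) := by ring
      linarith
    · rw [T9_useq n, T9_xseq m hm, dist_comm (0 : lp (fun _ : ℕ => ℝ) 1) (useq m),
        du0 m, du0 n, dxu m]
      have := inv_pos' hn; have := inv_pos' hm
      have e1 : (3:ℝ)/(n:ℝ) = 3 * (1/(n:ℝ)) := by ring
      have e2 : (3:ℝ)/(m:ℝ) = 3 * (1/(m:ℝ)) := by ring
      linarith
    · rw [T9_useq n, T9_useq m, dist_self, du0 n, du0 m]
      have := inv_pos' hn; have := inv_pos' hm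
      linarith
    · rw [T9_useq n, T9_zero, dist_self, du0 n]
      positivity
    · rw [T9_zero, T9_xseq m hm, dist_comm (0 : lp (fun _ : ℕ => ℝ) 1) (useq m),
        du0 m, dxu m, dist_self]
      have := inv_pos' hm
      have e2 : (3:ℝ)/(m:ℝ) = 3 * (1/(m:ℝ)) := by ring
      linarith
    · rw [T9_zero, T9_useq m, dist_self, du0 m]
      positivity
    · exact absurd rfl hxy
  · intro δ hδ
    obtain ⟨N, hN1, hN⟩ : ∃ N : ℕ, 1 ≤ N ∧ 3/(N:ℝ) < δ := by
      refine ⟨max 1 (⌈3/δ⌉₊ + 1), le_max_left _ _, ?_⟩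
      set N := max 1 (⌈3/δ⌉₊ + 1) with hNdef
      have hle : ((⌈3/δ⌉₊ + 1 : ℕ) : ℝ) ≤ (N : ℝ) := by
        exact_mod_cast Nat.cast_le.mpr (le_max_right _ _)
      have hceil : (3/δ : ℝ) < (N : ℝ) := by
        have := Nat.le_ceil (3/δ)
        push_cast at hle
        linarith
      have hN0 : (0:ℝ) < (N : ℝ) := lt_of_le_of_lt (by positivity) hceil
      rw [div_lt_iff₀ hN0, mul_comm]
      exact (div_lt_iff₀ hδ).mp hceil
    have hN1' : 1 ≤ N + 1 := by omega
    have hnm : N ≠ N + 1 := by omega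
    have hN0 : (0:ℝ) < (N:ℝ) := by exact_mod_cast hN1
    have hcast : ((N + 1 : ℕ) : ℝ) = (N : ℝ) + 1 := by push_cast; ring
    have h2 : 3/((N:ℝ)+1) ≤ 3/(N:ℝ) := by
      apply div_le_div_of_nonneg_left (by norm_num) hN0 (by linarith)
    have h3 : (0:ℝ) < 1/(N:ℝ) := by positivity
    have h4 : (0:ℝ) < 1/((N:ℝ)+1) := by positivity
    refine ⟨xseq N, xseq_mem hN1, xseq (N+1), xseq_mem hN1', ?_, ?_⟩
    · rw [T9_xseq _ hN1, T9_xseq _ hN1', dxu, dxu, hcast]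
      linarith
    · rw [T9_xseq _ hN1, T9_xseq _ hN1', duu hnm, hcast]
      linarith
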